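/- arXiv:1907.05055 — 2 statements merged into one kernel-verified Lean document; each statement's English description precedes it below -/
import Mathlib

section
/- Let G be a connected graph and M ∈ M(G) satisfying the Strong Arnold hypothesis. Then ker(M) is a semivalid representation of G; consequently μ(G) ≤ η(G). -/
open Matrix Set

variable {V : Type*} [Fintype V] [DecidableEq V]

/-- Positive support of a vector. -/
def posSupp (x : V → ℝ) : Set V := {v | 0 < x v}

/-- Negative support of a vector. -/
def negSupp (x : V → ℝ) : Set V := {v | x v < 0}

/-- Support of a vector. -/
def supp (x : V → ℝ) : Set V := {v | x v ≠ 0}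

/-- External neighborhood of a set of vertices. -/
def nbhd (G : SimpleGraph V) (S : Set V) : Set V := {v | v ∉ S ∧ ∃ u ∈ S, G.Adj u v}

/-- Number of connected components of the subgraph induced by `S`. -/
noncomputable def compCount (G : SimpleGraph V) (S : Set V) : ℕ :=
  Nat.card (G.induce S).ConnectedComponent

/-- `C` is (the vertex set of) a connected component of the subgraph induced by `S`. -/
def IsComponentOf (G : SimpleGraph V) (S C : Set V) : Prop :=
  ∃ K : (G.induce S).ConnectedComponent, C = Subtype.val '' K.supp

/-- `M ∈ M(G)`: a real symmetric matrix with exactly one negative eigenvalue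
(counted with multiplicity), negative entries on edges and zero off-diagonal
entries on non-edges. -/
structure CdVMatrix (G : SimpleGraph V) (M : Matrix V V ℝ) : Prop where
  herm : M.IsHermitian
  edge_neg : ∀ u v, G.Adj u v → M u v < 0
  nonedge_zero : ∀ u v, u ≠ v → ¬ G.Adj u v → M u v = 0
  one_neg : {i | herm.eigenvalues i < 0}.ncard = 1

/-- Semivalid representation of a graph: conditions (i)-(iv). -/
def Semivalid (G : SimpleGraph V) (L : Submodule ℝ (V → ℝ)) : Prop :=
  ∀ x ∈ L, x ≠ 0 →
    ((posSupp x).Nonempty ∧ (negSupp x).Nonempty) ∧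
    ((G.induce (posSupp x)).Connected ∨
      (compCount G (posSupp x) = 2 ∧ (G.induce (negSupp x)).Connected)) ∧
    ((∀ y ∈ L, y ≠ 0 → supp y ⊆ supp x → supp y = supp x) →
      (G.induce (posSupp x)).Connected ∧ (G.induce (negSupp x)).Connected) ∧
    (¬ (G.induce (posSupp x)).Connected →
      (∀ u ∈ posSupp x, ∀ v ∈ negSupp x, ¬ G.Adj u v) ∧
      (∀ C : Set V, IsComponentOf G (supp x) C → nbhd G C = nbhd G (supp x)))

/-- The sign-pattern cone of `x` in `L` (a relatively open cone of the fan `P(L)`). -/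
def signCone (L : Submodule ℝ (V → ℝ)) (x : V → ℝ) : Set (V → ℝ) :=
  {y | y ∈ L ∧ posSupp y = posSupp x ∧ negSupp y = negSupp x}

/-- The dimension of the cone of `x`, i.e. the dimension of its linear span. -/
noncomputable def coneDim (L : Submodule ℝ (V → ℝ)) (x : V → ℝ) : ℕ :=
  Module.finrank ℝ (Submodule.span ℝ (signCone L x))

/-- The graph parameter η: maximal dimension of a semivalid representation. -/
noncomputable def etaParam (G : SimpleGraph V) : ℕ :=
  sSup {n | ∃ L : Submodule ℝ (V → ℝ), Semivalid G L ∧ Module.finrank ℝ L = n}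

/-- Valid representation of a graph. -/
def Valid (G : SimpleGraph V) (X : Submodule ℝ (V → ℝ)) : Prop :=
  ∀ x ∈ X, x ≠ 0 → (G.induce (posSupp x)).Connected

/-- The graph parameter λ: maximal dimension of a valid representation. -/
noncomputable def lambdaParam (G : SimpleGraph V) : ℕ :=
  sSup {n | ∃ X : Submodule ℝ (V → ℝ), Valid G X ∧ Module.finrank ℝ X = n}

/-- The Strong Arnold hypothesis. -/
def SAH (G : SimpleGraph V) (M : Matrix V V ℝ) : Prop :=
  ∀ X : Matrix V V ℝ, X.IsSymm → (∀ u v, (u = v ∨ G.Adj u v) → X u v = 0) →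
    M * X = 0 → X = 0

/-- The Colin de Verdière parameter μ. -/
noncomputable def muParam (G : SimpleGraph V) : ℕ :=
  sSup {n | ∃ M : Matrix V V ℝ, CdVMatrix G M ∧ SAH G M ∧
    Module.finrank ℝ (LinearMap.ker M.mulVecLin) = n}

/-!
Let `φ > 0` be the Perron eigenvector of the negative eigenvalue of `M`: then `ker M ⟂ φ` and `M`
is positive semidefinite on `φ⟂`. If `y, z` have separated supports and `yᵀ M y ≤ 0`,
`zᵀ M z ≤ 0` (for `x ∈ ker M`, restrictions of `x` to components of `supp₊ x` or `supp₋ x` are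
such), then `w = (φ ⬝ z) y - (φ ⬝ y) z` is orthogonal to `φ` with `wᵀ M w ≤ 0`, so `M w = 0`
and `(φ ⬝ z)² yᵀ M y = 0`. These kernel vectors contradict minimality of support, rule out edges
between `supp₊ x` and `supp₋ x` once `supp₊ x` is disconnected, and, built from two separated
pairs `w₁, w₂`, contradict the Strong Arnold hypothesis through `X = w₁ w₂ᵀ + w₂ w₁ᵀ`.
-/

omit [DecidableEq V] in
lemma Matrix.dotProduct_mulVec_eq_sum_sum (M : Matrix V V ℝ) (y z : V → ℝ) :
    y ⬝ᵥ (M *ᵥ z) = ∑ u, ∑ v, y u * M u v * z v := by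
  simp only [dotProduct, mulVec, Finset.mul_sum, mul_assoc]

omit [DecidableEq V] in
lemma Matrix.dotProduct_mulVec_indicator {M : Matrix V V ℝ} {x : V → ℝ} (hx : M *ᵥ x = 0)
    (P : Set V) :
    P.indicator x ⬝ᵥ (M *ᵥ P.indicator x) = -(P.indicator x ⬝ᵥ (M *ᵥ Pᶜ.indicator x)) := by
  have h := congrArg (P.indicator x ⬝ᵥ M *ᵥ ·) (Set.indicator_self_add_compl P x)
  simp only [hx, mulVec_add, dotProduct_add, dotProduct_zero] at h
  linarith

omit [DecidableEq V] in
lemma dotProduct_smul_sub_smul_eq_zero (φ y z : V → ℝ) :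
    φ ⬝ᵥ ((φ ⬝ᵥ z) • y - (φ ⬝ᵥ y) • z) = 0 := by
  simp only [dotProduct_sub, dotProduct_smul, smul_eq_mul]; ring

namespace Matrix.IsHermitian

variable {M : Matrix V V ℝ} (hM : M.IsHermitian)
include hM

omit [DecidableEq V] in
lemma mulVec_dotProduct (y z : V → ℝ) : (M *ᵥ y) ⬝ᵥ z = y ⬝ᵥ (M *ᵥ z) := by
  have hT : Mᵀ = M := hM
  rw [dotProduct_mulVec, ← mulVec_transpose, hT, dotProduct_comm]

omit [DecidableEq V] in
lemma dotProduct_mulVec_smul_sub_smul {y z : V → ℝ} (hyz : y ⬝ᵥ (M *ᵥ z) = 0) (a b : ℝ) :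
    (a • y - b • z) ⬝ᵥ (M *ᵥ (a • y - b • z)) =
      a ^ 2 * (y ⬝ᵥ (M *ᵥ y)) + b ^ 2 * (z ⬝ᵥ (M *ᵥ z)) := by
  have hzy : z ⬝ᵥ (M *ᵥ y) = 0 := by rw [← hM.mulVec_dotProduct, dotProduct_comm, hyz]
  simp only [mulVec_sub, mulVec_smul, dotProduct_sub, sub_dotProduct, smul_dotProduct,
    dotProduct_smul, smul_eq_mul, hyz, hzy]
  ring

lemma inner_eigenvectorBasis (i : V) (y : V → ℝ) :
    inner ℝ (hM.eigenvectorBasis i) (WithLp.toLp 2 y) = ⇑(hM.eigenvectorBasis i) ⬝ᵥ y := by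
  rw [EuclideanSpace.inner_eq_star_dotProduct, star_trivial, dotProduct_comm]

lemma dotProduct_eq_sum_eigenvectorBasis (y z : V → ℝ) :
    y ⬝ᵥ z = ∑ i, (⇑(hM.eigenvectorBasis i) ⬝ᵥ y) * (⇑(hM.eigenvectorBasis i) ⬝ᵥ z) := by
  have := hM.eigenvectorBasis.sum_inner_mul_inner (WithLp.toLp 2 y) (WithLp.toLp 2 z)
  simp only [real_inner_comm _ (WithLp.toLp 2 y), inner_eigenvectorBasis] at this
  rw [this, EuclideanSpace.inner_eq_star_dotProduct, star_trivial]

lemma eq_sum_eigenvectorBasis (y : V → ℝ) :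
    y = ∑ i, (⇑(hM.eigenvectorBasis i) ⬝ᵥ y) • ⇑(hM.eigenvectorBasis i) := by
  have := congrArg WithLp.ofLp (hM.eigenvectorBasis.sum_repr' (WithLp.toLp 2 y))
  simp only [inner_eigenvectorBasis, WithLp.ofLp_sum, WithLp.ofLp_smul] at this
  exact this.symm

lemma eigenvectorBasis_dotProduct_mulVec (i : V) (y : V → ℝ) :
    ⇑(hM.eigenvectorBasis i) ⬝ᵥ (M *ᵥ y) = hM.eigenvalues i * (⇑(hM.eigenvectorBasis i) ⬝ᵥ y) := by
  rw [← hM.mulVec_dotProduct, hM.mulVec_eigenvectorBasis, smul_dotProduct, smul_eq_mul]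

lemma mulVec_eq_sum_eigenvectorBasis (y : V → ℝ) :
    M *ᵥ y = ∑ i, (hM.eigenvalues i * (⇑(hM.eigenvectorBasis i) ⬝ᵥ y)) •
      ⇑(hM.eigenvectorBasis i) := by
  simp only [← hM.eigenvectorBasis_dotProduct_mulVec]
  exact hM.eq_sum_eigenvectorBasis _

lemma dotProduct_mulVec_eq_sum_eigenvectorBasis (y : V → ℝ) :
    y ⬝ᵥ (M *ᵥ y) = ∑ i, hM.eigenvalues i * (⇑(hM.eigenvectorBasis i) ⬝ᵥ y) ^ 2 := by
  rw [hM.dotProduct_eq_sum_eigenvectorBasis]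
  simp only [hM.eigenvectorBasis_dotProduct_mulVec]
  exact Finset.sum_congr rfl fun i _ => by ring

variable {i₀ : V}

lemma eigenvalues_mul_dotProduct_self_le (h : ∀ i, hM.eigenvalues i₀ ≤ hM.eigenvalues i)
    (y : V → ℝ) : hM.eigenvalues i₀ * (y ⬝ᵥ y) ≤ y ⬝ᵥ (M *ᵥ y) := by
  rw [hM.dotProduct_mulVec_eq_sum_eigenvectorBasis, hM.dotProduct_eq_sum_eigenvectorBasis,
    Finset.mul_sum]
  refine Finset.sum_le_sum fun i _ => ?_
  rw [← sq]
  exact mul_le_mul_of_nonneg_right (h i) (sq_nonneg _)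

lemma eq_smul_of_dotProduct_mulVec_eq (h : ∀ i ≠ i₀, hM.eigenvalues i₀ < hM.eigenvalues i)
    {y : V → ℝ} (hy : y ⬝ᵥ (M *ᵥ y) = hM.eigenvalues i₀ * (y ⬝ᵥ y)) :
    y = (⇑(hM.eigenvectorBasis i₀) ⬝ᵥ y) • ⇑(hM.eigenvectorBasis i₀) := by
  have hsum : ∑ i, (hM.eigenvalues i - hM.eigenvalues i₀) * (⇑(hM.eigenvectorBasis i) ⬝ᵥ y) ^ 2
      = 0 := by
    rw [hM.dotProduct_mulVec_eq_sum_eigenvectorBasis, hM.dotProduct_eq_sum_eigenvectorBasis,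
      Finset.mul_sum, ← sub_eq_zero, ← Finset.sum_sub_distrib] at hy
    rw [← hy]
    exact Finset.sum_congr rfl fun i _ => by ring
  have hnonneg : ∀ i ∈ Finset.univ,
      0 ≤ (hM.eigenvalues i - hM.eigenvalues i₀) * (⇑(hM.eigenvectorBasis i) ⬝ᵥ y) ^ 2 := by
    intro i _
    rcases eq_or_ne i i₀ with rfl | hi
    · simp
    · exact mul_nonneg (sub_nonneg.mpr (h i hi).le) (sq_nonneg _)
  have hc : ∀ i ≠ i₀, ⇑(hM.eigenvectorBasis i) ⬝ᵥ y = 0 := fun i hi => by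
    have := (Finset.sum_eq_zero_iff_of_nonneg hnonneg).mp hsum i (Finset.mem_univ i)
    simpa [(sub_pos.mpr (h i hi)).ne'] using this
  conv_lhs => rw [hM.eq_sum_eigenvectorBasis y]
  exact Finset.sum_eq_single i₀ (fun i _ hi => by rw [hc i hi, zero_smul]) (by simp)

variable (hnn : ∀ i ≠ i₀, 0 ≤ hM.eigenvalues i) {y : V → ℝ}
  (hy : ⇑(hM.eigenvectorBasis i₀) ⬝ᵥ y = 0)
include hnn hy

lemma eigenvalues_mul_sq_nonneg (i : V) :
    0 ≤ hM.eigenvalues i * (⇑(hM.eigenvectorBasis i) ⬝ᵥ y) ^ 2 := by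
  rcases eq_or_ne i i₀ with rfl | hi
  · simp [hy]
  · exact mul_nonneg (hnn i hi) (sq_nonneg _)

lemma dotProduct_mulVec_nonneg_of_dotProduct_eq_zero : 0 ≤ y ⬝ᵥ (M *ᵥ y) := by
  rw [hM.dotProduct_mulVec_eq_sum_eigenvectorBasis]
  exact Finset.sum_nonneg fun i _ => hM.eigenvalues_mul_sq_nonneg hnn hy i

lemma mulVec_eq_zero_of_dotProduct_eq_zero (hq : y ⬝ᵥ (M *ᵥ y) = 0) : M *ᵥ y = 0 := by
  rw [hM.dotProduct_mulVec_eq_sum_eigenvectorBasis,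
    Finset.sum_eq_zero_iff_of_nonneg fun i _ => hM.eigenvalues_mul_sq_nonneg hnn hy i] at hq
  rw [hM.mulVec_eq_sum_eigenvectorBasis]
  refine Finset.sum_eq_zero fun i _ => ?_
  have := hq i (Finset.mem_univ i)
  rw [mul_eq_zero, sq_eq_zero_iff] at this
  rcases this with h | h <;> simp [h]

end Matrix.IsHermitian

lemma SimpleGraph.Reachable.eq_of_forall_adj {W α : Type*} {H : SimpleGraph W} {f : W → α}
    (hf : ∀ a b, H.Adj a b → f a = f b) {a b : W} (h : H.Reachable a b) : f a = f b := by
  obtain ⟨p⟩ := h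
  induction p with
  | nil => rfl
  | cons hadj _ ih => exact (hf _ _ hadj).trans ih

lemma SimpleGraph.exists_ne_connectedComponent_of_not_connected {W : Type*} {H : SimpleGraph W}
    [Nonempty W] (h : ¬ H.Connected) (K : H.ConnectedComponent) : ∃ K', K' ≠ K := by
  have : ¬ H.Preconnected := fun hp => h ⟨hp⟩
  obtain ⟨a, b, hab⟩ : ∃ a b, ¬ H.Reachable a b := by simpa [SimpleGraph.Preconnected] using this
  by_cases ha : H.connectedComponentMk a = K
  · exact ⟨H.connectedComponentMk b, fun hb => hab (ConnectedComponent.exact (ha.trans hb.symm))⟩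
  · exact ⟨_, ha⟩

def Separated (G : SimpleGraph V) (A B : Set V) : Prop :=
  ∀ u ∈ A, ∀ v ∈ B, u ≠ v ∧ ¬ G.Adj u v

namespace Separated

omit [Fintype V] [DecidableEq V]

variable {G : SimpleGraph V} {A B C D : Set V}

lemma mono {A' B' : Set V} (h : Separated G A B) (hA : A' ⊆ A) (hB : B' ⊆ B) :
    Separated G A' B' := fun u hu v hv => h u (hA hu) v (hB hv)

lemma union (hAC : Separated G A C) (hAD : Separated G A D) (hBC : Separated G B C)
    (hBD : Separated G B D) : Separated G (A ∪ B) (C ∪ D) := by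
  rintro u (hu | hu) v (hv | hv)
  exacts [hAC u hu v hv, hAD u hu v hv, hBC u hu v hv, hBD u hu v hv]

end Separated

namespace SimpleGraph.ConnectedComponent

omit [Fintype V] [DecidableEq V]

variable {G : SimpleGraph V} {S : Set V}

def ambientSupp (K : (G.induce S).ConnectedComponent) : Set V := Subtype.val '' K.supp

lemma mem_ambientSupp {K : (G.induce S).ConnectedComponent} {v : V} :
    v ∈ K.ambientSupp ↔ ∃ h : v ∈ S, (G.induce S).connectedComponentMk ⟨v, h⟩ = K := by
  simp [ambientSupp]

lemma mem_ambientSupp_mk {v : V} (h : v ∈ S) :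
    v ∈ ((G.induce S).connectedComponentMk ⟨v, h⟩).ambientSupp :=
  mem_ambientSupp.mpr ⟨h, rfl⟩

lemma ambientSupp_subset (K : (G.induce S).ConnectedComponent) : K.ambientSupp ⊆ S := by
  rintro v ⟨u, _, rfl⟩
  exact u.prop

lemma ambientSupp_nonempty (K : (G.induce S).ConnectedComponent) : K.ambientSupp.Nonempty := by
  obtain ⟨u, rfl⟩ := K.exists_rep
  exact ⟨u, mem_ambientSupp_mk u.prop⟩

lemma mem_ambientSupp_of_adj {K : (G.induce S).ConnectedComponent} {u v : V}
    (hu : u ∈ K.ambientSupp) (hv : v ∈ S) (hadj : G.Adj u v) : v ∈ K.ambientSupp := by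
  obtain ⟨hu', rfl⟩ := mem_ambientSupp.mp hu
  refine mem_ambientSupp.mpr ⟨hv, ConnectedComponent.sound ?_⟩
  exact (show (G.induce S).Adj ⟨v, hv⟩ ⟨u, hu'⟩ from hadj.symm).reachable

lemma separated_ambientSupp {K K' : (G.induce S).ConnectedComponent} (h : K ≠ K') :
    Separated G K.ambientSupp K'.ambientSupp := by
  intro u hu v hv
  obtain ⟨hu', rfl⟩ := mem_ambientSupp.mp hu
  refine ⟨?_, fun hadj => h ?_⟩
  · rintro rfl
    exact h (mem_ambientSupp.mp hv).2
  · exact (mem_ambientSupp.mp (mem_ambientSupp_of_adj hu (K'.ambientSupp_subset hv) hadj)).2.symm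
      |>.trans (mem_ambientSupp.mp hv).2

lemma separated_ambientSupp_diff (K : (G.induce S).ConnectedComponent) :
    Separated G K.ambientSupp (S \ K.ambientSupp) := fun _ hu _ hv =>
  ⟨fun h => hv.2 (h ▸ hu), fun hadj => hv.2 (mem_ambientSupp_of_adj hu hv.1 hadj)⟩

end SimpleGraph.ConnectedComponent

section Supports

omit [Fintype V] [DecidableEq V]

variable (x : V → ℝ)

lemma posSupp_neg : posSupp (-x) = negSupp x := by
  ext v; simp [posSupp, negSupp]

lemma supp_neg : supp (-x) = supp x := by
  ext v; simp [supp]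

lemma posSupp_subset_supp : posSupp x ⊆ supp x := fun _ hv => ne_of_gt hv

lemma negSupp_subset_supp : negSupp x ⊆ supp x := fun _ hv => ne_of_lt hv

lemma supp_indicator (P : Set V) : supp (P.indicator x) = P ∩ supp x :=
  Set.support_indicator

lemma supp_indicator_subset (P : Set V) : supp (P.indicator x) ⊆ P := by
  rw [supp_indicator]; exact Set.inter_subset_left

end Supports

omit [Fintype V] [DecidableEq V] in
lemma separated_supp_indicator_ambientSupp {G : SimpleGraph V} {S : Set V}
    {K K' : (G.induce S).ConnectedComponent} (h : K ≠ K') (x y : V → ℝ) :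
    Separated G (supp (K.ambientSupp.indicator x)) (supp (K'.ambientSupp.indicator y)) :=
  (SimpleGraph.ConnectedComponent.separated_ambientSupp h).mono (supp_indicator_subset x _)
    (supp_indicator_subset y _)

omit [Fintype V] [DecidableEq V] in
lemma ambientSupp_subset_posSupp_or_negSupp {G : SimpleGraph V} {x : V → ℝ}
    (hno : ∀ u ∈ posSupp x, ∀ v ∈ negSupp x, ¬ G.Adj u v)
    (K : (G.induce (supp x)).ConnectedComponent) :
    K.ambientSupp ⊆ posSupp x ∨ K.ambientSupp ⊆ negSupp x := by
  have hsign : ∀ a b : supp x, (G.induce (supp x)).Adj a b → (0 < x a) = (0 < x b) := by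
    intro a b hab
    have hna : ¬ 0 < x a → x a < 0 := fun h => (not_lt.mp h).lt_of_ne a.prop
    have hnb : ¬ 0 < x b → x b < 0 := fun h => (not_lt.mp h).lt_of_ne b.prop
    exact propext ⟨fun ha => by_contra fun hb => hno a ha b (hnb hb) hab,
      fun hb => by_contra fun ha => hno b hb a (hna ha) hab.symm⟩
  obtain ⟨r, rfl⟩ := K.exists_rep
  have hr : ∀ v ∈ ((G.induce (supp x)).connectedComponentMk r).ambientSupp,
      (0 < x r) = (0 < x v) := by
    intro v hv
    obtain ⟨hv, hK⟩ := SimpleGraph.ConnectedComponent.mem_ambientSupp.mp hv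
    exact (SimpleGraph.ConnectedComponent.exact hK.symm).eq_of_forall_adj hsign
  by_cases hpos : 0 < x r
  · exact Or.inl fun v hv => show 0 < x v from hr v hv ▸ hpos
  · refine Or.inr fun v hv => ?_
    have hv' : ¬ 0 < x v := hr v hv ▸ hpos
    exact (not_lt.mp hv').lt_of_ne
      ((SimpleGraph.ConnectedComponent.mem_ambientSupp.mp hv).1)

namespace CdVMatrix

variable {G : SimpleGraph V} {M : Matrix V V ℝ} (hM : CdVMatrix G M)
include hM

lemma apply_nonpos {u v : V} (huv : u ≠ v) : M u v ≤ 0 := by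
  by_cases h : G.Adj u v
  · exact (hM.edge_neg u v h).le
  · exact (hM.nonedge_zero u v huv h).le

lemma exists_eigenvalues_neg :
    ∃ i₀, hM.herm.eigenvalues i₀ < 0 ∧ ∀ i ≠ i₀, 0 ≤ hM.herm.eigenvalues i := by
  obtain ⟨i₀, hi₀⟩ := Set.ncard_eq_one.mp hM.one_neg
  refine ⟨i₀, (Set.ext_iff.mp hi₀ i₀).mpr rfl, fun i hi => not_lt.mp fun hneg => hi ?_⟩
  exact (Set.ext_iff.mp hi₀ i).mp hneg

lemma abs_dotProduct_mulVec_abs_le (y : V → ℝ) : |y| ⬝ᵥ (M *ᵥ |y|) ≤ y ⬝ᵥ (M *ᵥ y) := by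
  simp only [Matrix.dotProduct_mulVec_eq_sum_sum, Pi.abs_apply]
  refine Finset.sum_le_sum fun u _ => Finset.sum_le_sum fun v _ => ?_
  rcases eq_or_ne u v with rfl | huv
  · rw [mul_right_comm, abs_mul_abs_self, mul_right_comm]
  · have : y u * y v ≤ |y u| * |y v| := by rw [← abs_mul]; exact le_abs_self _
    nlinarith [hM.apply_nonpos huv]

lemma pos_of_mulVec_eq_smul (hG : G.Connected) {φ : V → ℝ} (hφ : 0 ≤ φ) (hφ0 : φ ≠ 0) {c : ℝ}
    (hMφ : M *ᵥ φ = c • φ) (v : V) : 0 < φ v := by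
  have hzero : ∀ u w, G.Adj u w → φ u = 0 → φ w = 0 := by
    intro u w hadj hu
    have hsum : ∑ w', M u w' * φ w' = 0 := by
      simpa [mulVec, dotProduct, hu] using congrFun hMφ u
    have hterm : ∀ w' ∈ Finset.univ, M u w' * φ w' ≤ 0 := by
      intro w' _
      rcases eq_or_ne u w' with rfl | hne
      · simp [hu]
      · exact mul_nonpos_of_nonpos_of_nonneg (hM.apply_nonpos hne) (hφ w')
    have := (Finset.sum_eq_zero_iff_of_nonpos hterm).mp hsum w (Finset.mem_univ w)
    exact (mul_eq_zero.mp this).resolve_left (hM.edge_neg u w hadj).ne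
  obtain ⟨v₀, hv₀⟩ := Function.ne_iff.mp hφ0
  have hconst : (φ v₀ = 0) = (φ v = 0) :=
    (hG.preconnected v₀ v).eq_of_forall_adj fun a b hab =>
      propext ⟨hzero a b hab, hzero b a hab.symm⟩
  exact (hφ v).lt_of_ne' fun h => hv₀ (hconst ▸ h)

lemma dotProduct_mulVec_eq_zero_of_separated {y z : V → ℝ} (h : Separated G (supp y) (supp z)) :
    y ⬝ᵥ (M *ᵥ z) = 0 := by
  rw [Matrix.dotProduct_mulVec_eq_sum_sum]
  refine Finset.sum_eq_zero fun u _ => Finset.sum_eq_zero fun v _ => ?_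
  by_cases hu : y u = 0
  · simp [hu]
  by_cases hv : z v = 0
  · simp [hv]
  obtain ⟨huv, hadj⟩ := h u hu v hv
  simp [hM.nonedge_zero u v huv hadj]

end CdVMatrix

omit [DecidableEq V] in
lemma SAH.eq_zero_or_eq_zero_of_separated {G : SimpleGraph V} {M : Matrix V V ℝ}
    (hSAH : SAH G M) {w₁ w₂ : V → ℝ} (h₁ : M *ᵥ w₁ = 0) (h₂ : M *ᵥ w₂ = 0)
    (hsep : Separated G (supp w₁) (supp w₂)) : w₁ = 0 ∨ w₂ = 0 := by
  have hprod : ∀ u v, (u = v ∨ G.Adj u v) → w₁ u * w₂ v = 0 := by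
    intro u v huv
    by_contra hne
    obtain ⟨hu, hv⟩ := mul_ne_zero_iff.mp hne
    obtain ⟨hne', hadj⟩ := hsep u hu v hv
    exact huv.elim hne' hadj
  have hX := hSAH (vecMulVec w₁ w₂ + vecMulVec w₂ w₁) ?_ ?_ ?_
  · by_contra! h
    obtain ⟨u, hu⟩ := Function.ne_iff.mp h.1
    obtain ⟨v, hv⟩ := Function.ne_iff.mp h.2
    have hvu : w₂ u = 0 := by_contra fun h' => (hsep u hu u h').1 rfl
    have := congrFun (congrFun hX u) v
    simp [vecMulVec_apply, hvu] at this
    exact this.elim hu hv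
  · simp [Matrix.IsSymm, transpose_add, transpose_vecMulVec, add_comm]
  · intro u v huv
    have hvu : v = u ∨ G.Adj v u := huv.imp Eq.symm G.adj_symm
    simp [vecMulVec_apply, hprod u v huv, mul_comm (w₂ u), hprod v u hvu]
  · simp [Matrix.mul_add, Matrix.mul_vecMulVec, h₁, h₂]

structure IsPerronVector (M : Matrix V V ℝ) (φ : V → ℝ) : Prop where
  pos : ∀ v, 0 < φ v
  dotProduct_eq_zero_of_mulVec_eq_zero : ∀ x, M *ᵥ x = 0 → φ ⬝ᵥ x = 0
  dotProduct_mulVec_nonneg : ∀ y, φ ⬝ᵥ y = 0 → 0 ≤ y ⬝ᵥ (M *ᵥ y)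
  mulVec_eq_zero : ∀ y, φ ⬝ᵥ y = 0 → y ⬝ᵥ (M *ᵥ y) = 0 → M *ᵥ y = 0

/-- `|ψ|` for the eigenvector `ψ` of the negative eigenvalue `λ₀` satisfies
`|ψ|ᵀ M |ψ| ≤ ψᵀ M ψ = λ₀`, so it minimises the Rayleigh quotient and is itself an eigenvector;
it is positive because `G` is connected. -/
theorem CdVMatrix.exists_isPerronVector {G : SimpleGraph V} {M : Matrix V V ℝ}
    (hG : G.Connected) (hM : CdVMatrix G M) : ∃ φ, IsPerronVector M φ := by
  obtain ⟨i₀, hneg, hnn⟩ := hM.exists_eigenvalues_neg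
  set hH := hM.herm
  set lam := hH.eigenvalues i₀
  set ψ : V → ℝ := ⇑(hH.eigenvectorBasis i₀)
  set φ := |ψ|
  have hψψ : ψ ⬝ᵥ ψ = 1 := by
    have := real_inner_self_eq_norm_sq (hH.eigenvectorBasis i₀)
    rwa [hH.eigenvectorBasis.orthonormal.1 i₀, one_pow,
      EuclideanSpace.inner_eq_star_dotProduct, star_trivial] at this
  have hφφ : φ ⬝ᵥ φ = 1 := by
    rw [← hψψ]
    exact Finset.sum_congr rfl fun v _ => abs_mul_abs_self (ψ v)
  have hq : φ ⬝ᵥ (M *ᵥ φ) = lam * (φ ⬝ᵥ φ) := by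
    refine le_antisymm ?_ (hH.eigenvalues_mul_dotProduct_self_le (fun i => ?_) _)
    · calc φ ⬝ᵥ (M *ᵥ φ) ≤ ψ ⬝ᵥ (M *ᵥ ψ) := hM.abs_dotProduct_mulVec_abs_le ψ
        _ = lam * (φ ⬝ᵥ φ) := by
          rw [hH.mulVec_eigenvectorBasis, dotProduct_smul, smul_eq_mul, hψψ, hφφ]
    · rcases eq_or_ne i i₀ with rfl | hi
      exacts [le_rfl, hneg.le.trans (hnn i hi)]
  set c := ψ ⬝ᵥ φ
  have hφψ : φ = c • ψ :=
    hH.eq_smul_of_dotProduct_mulVec_eq (fun i hi => hneg.trans_le (hnn i hi)) hq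
  have hφ0 : φ ≠ 0 := fun h => by simp [h] at hφφ
  have hc : c ≠ 0 := fun h => hφ0 (by rw [hφψ, h, zero_smul])
  have hMφ : M *ᵥ φ = lam • φ := by
    rw [hφψ, mulVec_smul, hH.mulVec_eigenvectorBasis, smul_comm]
  have horth : ∀ y, φ ⬝ᵥ y = 0 → ψ ⬝ᵥ y = 0 := fun y hy => by
    rw [hφψ, smul_dotProduct, smul_eq_mul] at hy
    exact (mul_eq_zero.mp hy).resolve_left hc
  refine ⟨φ, hM.pos_of_mulVec_eq_smul hG (abs_nonneg ψ) hφ0 hMφ, fun x hx => ?_,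
    fun y hy => hH.dotProduct_mulVec_nonneg_of_dotProduct_eq_zero hnn (horth y hy),
    fun y hy => hH.mulVec_eq_zero_of_dotProduct_eq_zero hnn (horth y hy)⟩
  have : lam * (φ ⬝ᵥ x) = 0 := by
    rw [← smul_eq_mul, ← smul_dotProduct, ← hMφ, hH.mulVec_dotProduct, hx, dotProduct_zero]
  exact (mul_eq_zero.mp this).resolve_left hneg.ne

/-- Typically the restriction of a kernel vector to a component of its positive or negative
support; two separated pieces combine into a kernel vector. -/
structure IsPiece (M : Matrix V V ℝ) (φ : V → ℝ) (y : V → ℝ) : Prop where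
  dotProduct_mulVec_nonpos : y ⬝ᵥ (M *ᵥ y) ≤ 0
  dotProduct_ne_zero : φ ⬝ᵥ y ≠ 0

namespace IsPerronVector

variable {M : Matrix V V ℝ} {φ : V → ℝ} (hφ : IsPerronVector M φ)
include hφ

omit [DecidableEq V] in
lemma dotProduct_indicator_pos {x : V → ℝ} {P : Set V} (hP : P ⊆ posSupp x) (hne : P.Nonempty) :
    0 < φ ⬝ᵥ P.indicator x := by
  obtain ⟨v₀, hv₀⟩ := hne
  refine Finset.sum_pos' (fun v _ => ?_) ⟨v₀, Finset.mem_univ _, ?_⟩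
  · by_cases hv : v ∈ P
    · simpa [hv] using mul_nonneg (hφ.pos v).le (hP hv).le
    · simp [hv]
  · simpa [hv₀] using mul_pos (hφ.pos v₀) (hP hv₀)

omit [DecidableEq V] in
lemma dotProduct_indicator_ne_zero {x : V → ℝ} {P : Set V}
    (hP : P ⊆ posSupp x ∨ P ⊆ negSupp x) (hne : P.Nonempty) : φ ⬝ᵥ P.indicator x ≠ 0 := by
  rcases hP with hP | hP
  · exact (hφ.dotProduct_indicator_pos hP hne).ne'
  · rw [← posSupp_neg] at hP
    have := hφ.dotProduct_indicator_pos hP hne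
    rw [Set.indicator_neg', dotProduct_neg, neg_pos] at this
    exact this.ne

omit [DecidableEq V] in
lemma posSupp_nonempty {x : V → ℝ} (hx : M *ᵥ x = 0) (hx0 : x ≠ 0) : (posSupp x).Nonempty := by
  by_contra hempty
  have hle : ∀ v ∈ Finset.univ, φ v * x v ≤ 0 := fun v _ =>
    mul_nonpos_of_nonneg_of_nonpos (hφ.pos v).le (not_lt.mp fun h => hempty ⟨v, h⟩)
  have hsum := (Finset.sum_eq_zero_iff_of_nonpos hle).mp
    (hφ.dotProduct_eq_zero_of_mulVec_eq_zero x hx)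
  exact hx0 (funext fun v =>
    (mul_eq_zero.mp (hsum v (Finset.mem_univ v))).resolve_left (hφ.pos v).ne')

omit [DecidableEq V] in
lemma negSupp_nonempty {x : V → ℝ} (hx : M *ᵥ x = 0) (hx0 : x ≠ 0) : (negSupp x).Nonempty := by
  rw [← posSupp_neg]
  exact hφ.posSupp_nonempty (by rw [mulVec_neg, hx, neg_zero]) (neg_ne_zero.mpr hx0)

variable (hH : M.IsHermitian) {y z : V → ℝ} (hy : y ⬝ᵥ (M *ᵥ y) ≤ 0) (hz : z ⬝ᵥ (M *ᵥ z) ≤ 0)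
  (hyz : y ⬝ᵥ (M *ᵥ z) = 0)
include hH hy hz hyz

omit [DecidableEq V] in
lemma dotProduct_mulVec_smul_sub_smul_eq_zero :
    ((φ ⬝ᵥ z) • y - (φ ⬝ᵥ y) • z) ⬝ᵥ (M *ᵥ ((φ ⬝ᵥ z) • y - (φ ⬝ᵥ y) • z)) = 0 := by
  refine le_antisymm ?_ (hφ.dotProduct_mulVec_nonneg _ (dotProduct_smul_sub_smul_eq_zero φ y z))
  rw [hH.dotProduct_mulVec_smul_sub_smul hyz]
  exact add_nonpos (mul_nonpos_of_nonneg_of_nonpos (sq_nonneg _) hy)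
    (mul_nonpos_of_nonneg_of_nonpos (sq_nonneg _) hz)

omit [DecidableEq V] in
lemma sq_mul_dotProduct_mulVec_eq_zero : (φ ⬝ᵥ z) ^ 2 * (y ⬝ᵥ (M *ᵥ y)) = 0 := by
  have h := hφ.dotProduct_mulVec_smul_sub_smul_eq_zero hH hy hz hyz
  rw [hH.dotProduct_mulVec_smul_sub_smul hyz] at h
  have h1 := mul_nonpos_of_nonneg_of_nonpos (sq_nonneg (φ ⬝ᵥ z)) hy
  have h2 := mul_nonpos_of_nonneg_of_nonpos (sq_nonneg (φ ⬝ᵥ y)) hz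
  linarith

omit [DecidableEq V] in
lemma mulVec_smul_sub_smul_eq_zero : M *ᵥ ((φ ⬝ᵥ z) • y - (φ ⬝ᵥ y) • z) = 0 :=
  hφ.mulVec_eq_zero _ (dotProduct_smul_sub_smul_eq_zero φ y z)
    (hφ.dotProduct_mulVec_smul_sub_smul_eq_zero hH hy hz hyz)

end IsPerronVector

namespace CdVMatrix

variable {G : SimpleGraph V} {M : Matrix V V ℝ} (hM : CdVMatrix G M) {x : V → ℝ}
include hM

lemma indicator_mul_apply_mul_indicator_compl_nonneg
    (K : (G.induce (posSupp x)).ConnectedComponent) (u v : V) :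
    0 ≤ K.ambientSupp.indicator x u * M u v * K.ambientSuppᶜ.indicator x v := by
  by_cases hu : u ∈ K.ambientSupp
  swap; · simp [hu]
  by_cases hv : v ∈ K.ambientSupp
  · simp [hv]
  have hxu : 0 < x u := K.ambientSupp_subset hu
  rw [Set.indicator_of_mem hu, Set.indicator_of_mem (Set.mem_compl hv)]
  by_cases hxv : 0 < x v
  · obtain ⟨huv, hadj⟩ := K.separated_ambientSupp_diff u hu v ⟨hxv, hv⟩
    simp [hM.nonedge_zero u v huv hadj]
  · have huv : u ≠ v := fun h => hxv (h ▸ hxu)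
    exact mul_nonneg_of_nonpos_of_nonpos
      (mul_nonpos_of_nonneg_of_nonpos hxu.le (hM.apply_nonpos huv)) (not_lt.mp hxv)

lemma mulVec_indicator_apply_neg {P : Set V} (hP : P ⊆ posSupp x) {u v : V} (hv : v ∉ P)
    (hu : u ∈ P) (hadj : G.Adj v u) : (M *ᵥ P.indicator x) v < 0 := by
  refine Finset.sum_neg' (fun w _ => ?_) ⟨u, Finset.mem_univ u, ?_⟩
  · by_cases hw : w ∈ P
    · have hvw : v ≠ w := fun h => hv (h ▸ hw)
      simpa [hw] using mul_nonpos_of_nonpos_of_nonneg (hM.apply_nonpos hvw) (hP hw).le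
    · simp [hw]
  · simpa [hu] using mul_neg_of_neg_of_pos (hM.edge_neg v u hadj) (hP hu)

lemma mulVec_indicator_apply_ne_zero {P : Set V} (hP : P ⊆ posSupp x ∨ P ⊆ negSupp x)
    {u v : V} (hv : v ∉ P) (hu : u ∈ P) (hadj : G.Adj v u) : (M *ᵥ P.indicator x) v ≠ 0 := by
  rcases hP with hP | hP
  · exact (hM.mulVec_indicator_apply_neg hP hv hu hadj).ne
  · rw [← posSupp_neg] at hP
    have := hM.mulVec_indicator_apply_neg hP hv hu hadj
    rw [Set.indicator_neg', mulVec_neg, Pi.neg_apply, neg_neg_iff_pos] at this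
    exact this.ne'

variable (hx : M *ᵥ x = 0)
include hx

lemma dotProduct_mulVec_indicator_posSupp_nonpos
    (K : (G.induce (posSupp x)).ConnectedComponent) :
    K.ambientSupp.indicator x ⬝ᵥ (M *ᵥ K.ambientSupp.indicator x) ≤ 0 := by
  rw [M.dotProduct_mulVec_indicator hx, neg_nonpos, M.dotProduct_mulVec_eq_sum_sum]
  exact Finset.sum_nonneg fun u _ => Finset.sum_nonneg fun v _ =>
    hM.indicator_mul_apply_mul_indicator_compl_nonneg K u v

lemma dotProduct_mulVec_indicator_posSupp_neg
    {K : (G.induce (posSupp x)).ConnectedComponent} {u v : V} (hu : u ∈ K.ambientSupp)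
    (hv : v ∈ negSupp x) (hadj : G.Adj u v) :
    K.ambientSupp.indicator x ⬝ᵥ (M *ᵥ K.ambientSupp.indicator x) < 0 := by
  rw [M.dotProduct_mulVec_indicator hx, neg_neg_iff_pos, M.dotProduct_mulVec_eq_sum_sum]
  have hv' : v ∉ K.ambientSupp := fun h =>
    lt_asymm (show x v < 0 from hv) (show 0 < x v from K.ambientSupp_subset h)
  have hterm : 0 < K.ambientSupp.indicator x u * M u v * K.ambientSuppᶜ.indicator x v := by
    rw [Set.indicator_of_mem hu, Set.indicator_of_mem (Set.mem_compl hv')]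
    exact mul_pos_of_neg_of_neg
      (mul_neg_of_pos_of_neg (K.ambientSupp_subset hu) (hM.edge_neg u v hadj)) hv
  refine Finset.sum_pos' (fun u' _ => Finset.sum_nonneg fun v' _ =>
    hM.indicator_mul_apply_mul_indicator_compl_nonneg K u' v') ⟨u, Finset.mem_univ u, ?_⟩
  exact Finset.sum_pos' (fun v' _ => hM.indicator_mul_apply_mul_indicator_compl_nonneg K u v')
    ⟨v, Finset.mem_univ v, hterm⟩

lemma isPiece_indicator_posSupp {φ : V → ℝ} (hφ : IsPerronVector M φ)
    (K : (G.induce (posSupp x)).ConnectedComponent) : IsPiece M φ (K.ambientSupp.indicator x) :=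
  ⟨hM.dotProduct_mulVec_indicator_posSupp_nonpos hx K,
    hφ.dotProduct_indicator_ne_zero (Or.inl K.ambientSupp_subset) K.ambientSupp_nonempty⟩

lemma dotProduct_mulVec_indicator_supp_eq_zero (K : (G.induce (supp x)).ConnectedComponent) :
    K.ambientSupp.indicator x ⬝ᵥ (M *ᵥ K.ambientSupp.indicator x) = 0 := by
  rw [M.dotProduct_mulVec_indicator hx, hM.dotProduct_mulVec_eq_zero_of_separated, neg_zero]
  refine K.separated_ambientSupp_diff.mono (supp_indicator_subset x _) ?_
  rw [supp_indicator]
  exact fun v hv => ⟨hv.2, hv.1⟩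

end CdVMatrix

namespace CdVMatrix

open SimpleGraph.ConnectedComponent

variable {G : SimpleGraph V} {M : Matrix V V ℝ} (hM : CdVMatrix G M) {φ : V → ℝ}
  (hφ : IsPerronVector M φ)
include hM hφ

lemma exists_mulVec_eq_zero_of_isPiece {y z : V → ℝ} (hy : IsPiece M φ y) (hz : IsPiece M φ z)
    (hsep : Separated G (supp y) (supp z)) :
    ∃ w, M *ᵥ w = 0 ∧ w ≠ 0 ∧ supp w ⊆ supp y ∪ supp z := by
  refine ⟨(φ ⬝ᵥ z) • y - (φ ⬝ᵥ y) • z, hφ.mulVec_smul_sub_smul_eq_zero hM.herm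
    hy.1 hz.1 (hM.dotProduct_mulVec_eq_zero_of_separated hsep), fun hw => ?_, fun v hv => ?_⟩
  · have hy0 : y ≠ 0 := fun h => hy.2 (by simp [h])
    obtain ⟨v, hv⟩ := Function.ne_iff.mp hy0
    have hzv : z v = 0 := by_contra fun h => (hsep v hv v h).1 rfl
    have := congrFun hw v
    simp only [Pi.sub_apply, Pi.smul_apply, smul_eq_mul, hzv, mul_zero, sub_zero,
      Pi.zero_apply] at this
    exact mul_ne_zero hz.2 hv this
  · by_contra h
    simp only [Set.mem_union, not_or] at h
    exact hv (by simp [not_not.mp h.1, not_not.mp h.2])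

lemma false_of_separated_isPiece (hSAH : SAH G M) {y₁ y₂ y₃ y₄ : V → ℝ}
    (h₁ : IsPiece M φ y₁) (h₂ : IsPiece M φ y₂) (h₃ : IsPiece M φ y₃) (h₄ : IsPiece M φ y₄)
    (h₁₂ : Separated G (supp y₁) (supp y₂)) (h₃₄ : Separated G (supp y₃) (supp y₄))
    (hsep : Separated G (supp y₁ ∪ supp y₂) (supp y₃ ∪ supp y₄)) : False := by
  obtain ⟨w₁, hw₁, hw₁0, hs₁⟩ := hM.exists_mulVec_eq_zero_of_isPiece hφ h₁ h₂ h₁₂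
  obtain ⟨w₂, hw₂, hw₂0, hs₂⟩ := hM.exists_mulVec_eq_zero_of_isPiece hφ h₃ h₄ h₃₄
  exact (hSAH.eq_zero_or_eq_zero_of_separated hw₁ hw₂ (hsep.mono hs₁ hs₂)).elim hw₁0 hw₂0

variable {x : V → ℝ} (hx : M *ᵥ x = 0)
include hx

lemma not_adj_of_not_connected (hdisc : ¬ (G.induce (posSupp x)).Connected) :
    ∀ u ∈ posSupp x, ∀ v ∈ negSupp x, ¬ G.Adj u v := by
  intro u hu v hv hadj
  have : Nonempty (posSupp x) := ⟨⟨u, hu⟩⟩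
  set K := (G.induce (posSupp x)).connectedComponentMk ⟨u, hu⟩
  obtain ⟨K', hK'⟩ := SimpleGraph.exists_ne_connectedComponent_of_not_connected hdisc K
  have hneg := hM.dotProduct_mulVec_indicator_posSupp_neg hx
    (mem_ambientSupp_mk hu) hv hadj
  have hpiece := hM.isPiece_indicator_posSupp hx hφ K'
  have h := hφ.sq_mul_dotProduct_mulVec_eq_zero hM.herm hneg.le hpiece.1
    (hM.dotProduct_mulVec_eq_zero_of_separated (separated_supp_indicator_ambientSupp hK'.symm x x))
  exact (mul_ne_zero (pow_ne_zero 2 hpiece.2) hneg.ne) h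

lemma connected_posSupp_of_minimal (hx0 : x ≠ 0)
    (hmin : ∀ y, M *ᵥ y = 0 → y ≠ 0 → supp y ⊆ supp x → supp y = supp x) :
    (G.induce (posSupp x)).Connected := by
  by_contra hdisc
  obtain ⟨u, hu⟩ := hφ.posSupp_nonempty hx hx0
  have : Nonempty (posSupp x) := ⟨⟨u, hu⟩⟩
  set K := (G.induce (posSupp x)).connectedComponentMk ⟨u, hu⟩
  obtain ⟨K', hK'⟩ := SimpleGraph.exists_ne_connectedComponent_of_not_connected hdisc K
  obtain ⟨w, hw, hw0, hsupp⟩ := hM.exists_mulVec_eq_zero_of_isPiece hφ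
    (hM.isPiece_indicator_posSupp hx hφ K) (hM.isPiece_indicator_posSupp hx hφ K')
    (separated_supp_indicator_ambientSupp hK'.symm x x)
  have hwpos : supp w ⊆ posSupp x := hsupp.trans (Set.union_subset
    ((supp_indicator_subset x _).trans K.ambientSupp_subset)
    ((supp_indicator_subset x _).trans K'.ambientSupp_subset))
  obtain ⟨v, hv⟩ := hφ.negSupp_nonempty hx hx0
  have hvw : v ∈ supp w := by
    rw [hmin w hw hw0 (hwpos.trans (posSupp_subset_supp x))]
    exact negSupp_subset_supp x hv
  exact lt_asymm (show x v < 0 from hv) (hwpos hvw)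

/-- Components of `G[supp₊ x]` and of `G[supp₋ x]` give pairwise separated pieces, so by the
Strong Arnold hypothesis there are at most three of them. -/
lemma compCount_posSupp_eq_two_and_connected_negSupp (hSAH : SAH G M) (hx0 : x ≠ 0)
    (hdisc : ¬ (G.induce (posSupp x)).Connected) :
    compCount G (posSupp x) = 2 ∧ (G.induce (negSupp x)).Connected := by
  have hx' : M *ᵥ (-x) = 0 := by rw [mulVec_neg, hx, neg_zero]
  have hno := hM.not_adj_of_not_connected hφ hx hdisc
  have sepPosNeg : ∀ (K : (G.induce (posSupp x)).ConnectedComponent)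
      (N : (G.induce (posSupp (-x))).ConnectedComponent),
      Separated G (supp (K.ambientSupp.indicator x)) (supp (N.ambientSupp.indicator (-x))) := by
    intro K N u hu v hv
    have hu' : 0 < x u := K.ambientSupp_subset (supp_indicator_subset x _ hu)
    have hv' : v ∈ negSupp x := posSupp_neg x ▸ N.ambientSupp_subset (supp_indicator_subset _ _ hv)
    exact ⟨fun h => lt_asymm hu' (h ▸ hv'), hno u hu' v hv'⟩
  obtain ⟨u, hu⟩ := hφ.posSupp_nonempty hx hx0
  have : Nonempty (posSupp x) := ⟨⟨u, hu⟩⟩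
  set K₁ := (G.induce (posSupp x)).connectedComponentMk ⟨u, hu⟩
  obtain ⟨K₂, hK₂⟩ := SimpleGraph.exists_ne_connectedComponent_of_not_connected hdisc K₁
  obtain ⟨v, hv⟩ := hφ.posSupp_nonempty hx' (neg_ne_zero.mpr hx0)
  have : Nonempty (posSupp (-x)) := ⟨⟨v, hv⟩⟩
  set N₁ := (G.induce (posSupp (-x))).connectedComponentMk ⟨v, hv⟩
  have pos := hM.isPiece_indicator_posSupp hx hφ
  have neg := hM.isPiece_indicator_posSupp hx' hφ
  constructor
  · refine Nat.card_eq_two_iff.mpr ⟨K₁, K₂, hK₂.symm, Set.eq_univ_of_forall fun K => ?_⟩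
    by_contra hK
    simp only [Set.mem_insert_iff, Set.mem_singleton_iff, not_or] at hK
    exact hM.false_of_separated_isPiece hφ hSAH (pos K) (pos K₁) (pos K₂) (neg N₁)
      (separated_supp_indicator_ambientSupp hK.1 x x) (sepPosNeg K₂ N₁)
      (Separated.union (separated_supp_indicator_ambientSupp hK.2 x x) (sepPosNeg K N₁)
        (separated_supp_indicator_ambientSupp hK₂.symm x x) (sepPosNeg K₁ N₁))
  · rw [← posSupp_neg]
    by_contra hdisc'
    obtain ⟨N₂, hN₂⟩ := SimpleGraph.exists_ne_connectedComponent_of_not_connected hdisc' N₁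
    exact hM.false_of_separated_isPiece hφ hSAH (pos K₁) (pos K₂) (neg N₁) (neg N₂)
      (separated_supp_indicator_ambientSupp hK₂.symm x x)
      (separated_supp_indicator_ambientSupp hN₂.symm (-x) (-x))
      (Separated.union (sepPosNeg K₁ N₁) (sepPosNeg K₁ N₂) (sepPosNeg K₂ N₁) (sepPosNeg K₂ N₂))

/-- For a second component `K₀` of `G[supp x]` adjacent to `v`, the kernel vector built from
`K` and `K₀` would have `(M w) v ≠ 0` unless `v` also has a neighbour in `K`. -/
lemma nbhd_eq_of_isComponentOf (hno : ∀ u ∈ posSupp x, ∀ v ∈ negSupp x, ¬ G.Adj u v)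
    {C : Set V} (hC : IsComponentOf G (supp x) C) : nbhd G C = nbhd G (supp x) := by
  obtain ⟨K, rfl⟩ := hC
  ext v
  constructor
  · rintro ⟨hvK, u, hu, hadj⟩
    exact ⟨fun hv => hvK (mem_ambientSupp_of_adj hu hv hadj), u, K.ambientSupp_subset hu, hadj⟩
  rintro ⟨hvS, u, hu, hadj⟩
  refine ⟨fun h => hvS (K.ambientSupp_subset h), ?_⟩
  set K₀ := (G.induce (supp x)).connectedComponentMk ⟨u, hu⟩
  by_cases hK : K₀ = K
  · exact ⟨u, hK ▸ mem_ambientSupp_mk hu, hadj⟩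
  by_contra! hnot
  set y := K.ambientSupp.indicator x
  set z := K₀.ambientSupp.indicator x
  have hyz := hM.dotProduct_mulVec_eq_zero_of_separated (y := y) (z := z)
    (separated_supp_indicator_ambientSupp (Ne.symm hK) x x)
  have hw := congrFun (hφ.mulVec_smul_sub_smul_eq_zero (y := y) (z := z) hM.herm
    (hM.dotProduct_mulVec_indicator_supp_eq_zero hx K).le
    (hM.dotProduct_mulVec_indicator_supp_eq_zero hx K₀).le hyz) v
  have hMy : (M *ᵥ y) v = 0 := by
    refine Finset.sum_eq_zero fun w _ => ?_
    by_cases hw : w ∈ K.ambientSupp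
    · have hvw : v ≠ w := fun h => hvS (h ▸ K.ambientSupp_subset hw)
      simp [hM.nonedge_zero v w hvw fun h => hnot w hw h.symm]
    · simp [y, hw]
  have hMz : (M *ᵥ z) v ≠ 0 := hM.mulVec_indicator_apply_ne_zero
    (ambientSupp_subset_posSupp_or_negSupp hno K₀)
    (fun h => hvS (K₀.ambientSupp_subset h)) (mem_ambientSupp_mk hu) hadj.symm
  have hφy : φ ⬝ᵥ y ≠ 0 := hφ.dotProduct_indicator_ne_zero
    (ambientSupp_subset_posSupp_or_negSupp hno K) K.ambientSupp_nonempty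
  simp only [mulVec_sub, mulVec_smul, Pi.sub_apply, Pi.smul_apply, smul_eq_mul, hMy, mul_zero,
    zero_sub, Pi.zero_apply, neg_eq_zero] at hw
  exact mul_ne_zero hφy hMz hw

end CdVMatrix

theorem semivalid_ker {G : SimpleGraph V} {M : Matrix V V ℝ} (hG : G.Connected)
    (hM : CdVMatrix G M) (hSAH : SAH G M) : Semivalid G (LinearMap.ker M.mulVecLin) := by
  obtain ⟨φ, hφ⟩ := hM.exists_isPerronVector hG
  intro x hx hx0
  rw [LinearMap.mem_ker, mulVecLin_apply] at hx
  have hx' : M *ᵥ (-x) = 0 := by rw [mulVec_neg, hx, neg_zero]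
  refine ⟨⟨hφ.posSupp_nonempty hx hx0, hφ.negSupp_nonempty hx hx0⟩, ?_, fun hmin => ?_,
    fun hdisc => ?_⟩
  · by_cases hconn : (G.induce (posSupp x)).Connected
    exacts [Or.inl hconn,
      Or.inr (hM.compCount_posSupp_eq_two_and_connected_negSupp hφ hx hSAH hx0 hconn)]
  · have hmin' : ∀ y, M *ᵥ y = 0 → y ≠ 0 → supp y ⊆ supp x → supp y = supp x :=
      fun y hy => hmin y (by rwa [LinearMap.mem_ker, mulVecLin_apply])
    refine ⟨hM.connected_posSupp_of_minimal hφ hx hx0 hmin', ?_⟩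
    rw [← posSupp_neg]
    refine hM.connected_posSupp_of_minimal hφ hx' (neg_ne_zero.mpr hx0) ?_
    simpa only [supp_neg] using hmin'
  · have hno := hM.not_adj_of_not_connected hφ hx hdisc
    exact ⟨hno, fun C hC => hM.nbhd_eq_of_isComponentOf hφ hx hno hC⟩

theorem muParam_le_etaParam {G : SimpleGraph V} (hG : G.Connected) : muParam G ≤ etaParam G := by
  have hbdd : BddAbove {n | ∃ L : Submodule ℝ (V → ℝ), Semivalid G L ∧ Module.finrank ℝ L = n} :=
    ⟨Module.finrank ℝ (V → ℝ), by rintro _ ⟨L, _, rfl⟩; exact Submodule.finrank_le L⟩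
  refine csSup_le' ?_
  rintro _ ⟨M, hM, hSAH, rfl⟩
  exact le_csSup hbdd ⟨_, semivalid_ker hG hM hSAH, rfl⟩

/-- for `G` connected and `M ∈ M(G)` satisfying the Strong Arnold
hypothesis, `ker(M)` is a semivalid representation of `G`; consequently `μ(G) ≤ η(G)`. -/
theorem stmt14 (G : SimpleGraph V) (hG : G.Connected) (M : Matrix V V ℝ)
    (hM : CdVMatrix G M) (hSAH : SAH G M) :
    Semivalid G (LinearMap.ker M.mulVecLin) ∧ muParam G ≤ etaParam G :=
  ⟨semivalid_ker hG hM hSAH, muParam_le_etaParam hG⟩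
end

section
/- Let L be a semivalid representation of a connected graph G, β a broken cone of P(L), and α a cone in the boundary of β. Then supp_+(α) contains at least one of the two connected components of G[supp_+(β)], where this containment in fact is equality with a single component. -/
/-!
As `α` lies in the closure of `β`, `supp₊ x ⊆ supp₊ y` and `supp₋ x ⊆ supp₋ y`, with one inclusion
strict. If `supp₊ x = supp₊ y`, then `x` is broken too, so `supp₋ x` is a component of `supp x`
sharing its neighbourhood with a positive component; since `supp₋ y ⊋ supp₋ x` is connected, some
vertex of `supp₋ y` would be adjacent to `supp₊ y`, which condition (iv) for `y` forbids.

Otherwise let `z = y - K x` with `K` large, so that `supp₊ z = (supp₊ y \ supp₊ x) ∪ supp₋ x` and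
`supp₋ z = supp₊ x ∪ (supp₋ y \ supp₋ x)`. The two parts of `supp₊ z` are not joined by an edge, so
`z` is broken: `supp₊ z` has exactly two components and `supp₋ z` is connected. The latter forces
`supp₋ y = supp₋ x` and makes `supp₊ x` connected; the former makes `supp₊ y \ supp₊ x` connected.
Two connected sets whose union `supp₊ y` is disconnected are not joined by an edge, so `supp₊ x` is
a component of `G[supp₊ y]`.
-/

open Matrix Set

variable {V : Type*} [Fintype V] [DecidableEq V]

section

omit [Fintype V] [DecidableEq V]

open SimpleGraph

def NoEdgeBetween (G : SimpleGraph V) (A B : Set V) : Prop :=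
  ∀ u ∈ A, ∀ v ∈ B, ¬ G.Adj u v

namespace NoEdgeBetween

variable {G : SimpleGraph V} {A A' B B' : Set V}

lemma symm (h : NoEdgeBetween G A B) : NoEdgeBetween G B A :=
  fun u hu v hv huv => h v hv u hu huv.symm

lemma mono (h : NoEdgeBetween G A B) (hA : A' ⊆ A) (hB : B' ⊆ B) : NoEdgeBetween G A' B' :=
  fun u hu v hv => h u (hA hu) v (hB hv)

lemma exists_reachable_induce {S : Set V} (h : NoEdgeBetween G A (S \ A)) {a b : S}
    (hab : (G.induce S).Reachable a b) (ha : ↑a ∈ A) :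
    ∃ hb : ↑b ∈ A, (G.induce A).Reachable ⟨a, ha⟩ ⟨b, hb⟩ := by
  obtain ⟨w⟩ := hab
  induction w with
  | nil => exact ⟨ha, .refl _⟩
  | @cons u v _ huv _ ih =>
    have hv : ↑v ∈ A := by_contra fun hv => h u ha v ⟨v.2, hv⟩ huv
    obtain ⟨hb, hvb⟩ := ih hv
    exact ⟨hb, (show (G.induce A).Adj ⟨u, ha⟩ ⟨v, hv⟩ from huv).reachable.trans hvb⟩

lemma not_connected_induce_union (h : NoEdgeBetween G A B) (hA : A.Nonempty) (hB : B.Nonempty)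
    (hAB : Disjoint A B) : ¬ (G.induce (A ∪ B)).Connected := by
  obtain ⟨a, ha⟩ := hA
  obtain ⟨b, hb⟩ := hB
  intro hconn
  have hsep : NoEdgeBetween G A ((A ∪ B) \ A) := h.mono subset_rfl (by simp)
  obtain ⟨hbA, -⟩ := hsep.exists_reachable_induce
    (hconn.preconnected ⟨a, Or.inl ha⟩ ⟨b, Or.inr hb⟩) ha
  exact hAB.notMem_of_mem_left hbA hb

lemma of_not_connected_induce_union (hA : (G.induce A).Connected) (hB : (G.induce B).Connected)
    (h : ¬ (G.induce (A ∪ B)).Connected) : NoEdgeBetween G A B :=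
  fun _ hu _ hv huv => h (connected_induce_union hA.preconnected hB.preconnected hu hv huv)

end NoEdgeBetween

variable {G : SimpleGraph V}

lemma isComponentOf_iff {S A : Set V} :
    IsComponentOf G S A ↔ A ⊆ S ∧ (G.induce A).Connected ∧ NoEdgeBetween G A (S \ A) := by
  constructor
  · rintro ⟨K, rfl⟩
    have hsep : NoEdgeBetween G (Subtype.val '' K.supp) (S \ Subtype.val '' K.supp) := by
      rintro _ ⟨u, hu, rfl⟩ v ⟨hvS, hvK⟩ huv
      refine hvK ⟨⟨v, hvS⟩, ?_, rfl⟩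
      rw [ConnectedComponent.mem_supp_iff] at hu ⊢
      exact (ConnectedComponent.connectedComponentMk_eq_of_adj
        (show (G.induce S).Adj ⟨v, hvS⟩ u from huv.symm)).trans hu
    refine ⟨by rintro _ ⟨v, -, rfl⟩; exact v.2, ?_, hsep⟩
    obtain ⟨a, rfl⟩ := K.exists_rep
    refine (connected_iff _).2 ⟨?_, ⟨⟨a, a, rfl, rfl⟩⟩⟩
    rintro ⟨_, u, hu, rfl⟩ ⟨_, v, hv, rfl⟩
    have huv : (G.induce S).Reachable u v := ConnectedComponent.exact (hu.trans hv.symm)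
    exact (hsep.exists_reachable_induce huv ⟨u, hu, rfl⟩).2
  · rintro ⟨hAS, hA, hsep⟩
    obtain ⟨⟨a, ha⟩⟩ := hA.nonempty
    refine ⟨(G.induce S).connectedComponentMk ⟨a, hAS ha⟩, Set.ext fun v => ⟨fun hv => ?_, ?_⟩⟩
    · refine ⟨⟨v, hAS hv⟩, ConnectedComponent.sound ?_, rfl⟩
      exact ((hA.preconnected ⟨a, ha⟩ ⟨v, hv⟩).map (induceHomOfLE G hAS).toHom).symm
    · rintro ⟨v, hv, rfl⟩
      exact (hsep.exists_reachable_induce (ConnectedComponent.exact hv).symm ha).1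

lemma IsComponentOf.of_noEdgeBetween {S T A : Set V} (hA : IsComponentOf G S A) (hST : S ⊆ T)
    (h : NoEdgeBetween G S (T \ S)) : IsComponentOf G T A := by
  obtain ⟨hAS, hconn, hsep⟩ := isComponentOf_iff.1 hA
  refine isComponentOf_iff.2 ⟨hAS.trans hST, hconn, fun u hu v ⟨hvT, hvA⟩ => ?_⟩
  by_cases hvS : v ∈ S
  · exact hsep u hu v ⟨hvS, hvA⟩
  · exact h u (hAS hu) v ⟨hvT, hvS⟩

lemma connected_induce_left_of_compCount_union_eq_two {A B : Set V}
    (h2 : compCount G (A ∪ B) = 2) (hA : A.Nonempty) (hB : B.Nonempty) (hAB : Disjoint A B)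
    (h : NoEdgeBetween G A B) : (G.induce A).Connected := by
  obtain ⟨a, ha⟩ := hA
  obtain ⟨b, hb⟩ := hB
  have hsep : NoEdgeBetween G A ((A ∪ B) \ A) := h.mono subset_rfl (by simp)
  let c : A → (G.induce (A ∪ B)).ConnectedComponent := fun u =>
    (G.induce (A ∪ B)).connectedComponentMk ⟨u, Or.inl u.2⟩
  have hcb : ∀ u, c u ≠ (G.induce (A ∪ B)).connectedComponentMk ⟨b, Or.inr hb⟩ := fun u hu =>
    hAB.notMem_of_mem_left (hsep.exists_reachable_induce (ConnectedComponent.exact hu) u.2).1 hb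
  refine (connected_iff _).2 ⟨fun u v => ?_, ⟨⟨a, ha⟩⟩⟩
  have huv : c u = c v := ((Nat.card_eq_two_iff' _).1 h2).unique (hcb u) (hcb v)
  exact (hsep.exists_reachable_induce (ConnectedComponent.exact huv) u.2).2

lemma disjoint_posSupp_negSupp (x : V → ℝ) : Disjoint (posSupp x) (negSupp x) :=
  Set.disjoint_left.2 fun v hp hn => lt_asymm (show 0 < x v from hp) hn

lemma supp_diff_posSupp (x : V → ℝ) : supp x \ posSupp x = negSupp x := by
  ext v
  simp only [supp, posSupp, negSupp, mem_sdiff, mem_ofPred_eq, not_lt]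
  exact ⟨fun h => lt_of_le_of_ne h.2 h.1, fun h => ⟨h.ne, h.le⟩⟩

lemma supp_diff_negSupp (x : V → ℝ) : supp x \ negSupp x = posSupp x := by
  ext v
  simp only [supp, posSupp, negSupp, mem_sdiff, mem_ofPred_eq, not_lt]
  exact ⟨fun h => lt_of_le_of_ne h.2 h.1.symm, fun h => ⟨h.ne', h.le⟩⟩

lemma ne_zero_of_posSupp_nonempty {x : V → ℝ} (h : (posSupp x).Nonempty) : x ≠ 0 := by
  rintro rfl
  obtain ⟨v, hv⟩ := h
  exact lt_irrefl (0 : ℝ) hv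

lemma posSupp_subset_of_mem_closure_signCone {L : Submodule ℝ (V → ℝ)} {x y : V → ℝ}
    (h : x ∈ closure (signCone L y)) : posSupp x ⊆ posSupp y := by
  intro v (hv : 0 < x v)
  by_contra hvy
  have hcl : closure (signCone L y) ⊆ {z | z v ≤ 0} :=
    closure_minimal (fun z hz => show z v ≤ 0 from le_of_not_gt fun hzv =>
      hvy (hz.2.1 ▸ (hzv : v ∈ posSupp z))) (isClosed_le (continuous_apply v) continuous_const)
  exact (hcl h).not_gt hv

lemma negSupp_subset_of_mem_closure_signCone {L : Submodule ℝ (V → ℝ)} {x y : V → ℝ}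
    (h : x ∈ closure (signCone L y)) : negSupp x ⊆ negSupp y := by
  intro v (hv : x v < 0)
  by_contra hvy
  have hcl : closure (signCone L y) ⊆ {z | 0 ≤ z v} :=
    closure_minimal (fun z hz => show 0 ≤ z v from le_of_not_gt fun hzv =>
      hvy (hz.2.2 ▸ (hzv : v ∈ negSupp z))) (isClosed_le continuous_const (continuous_apply v))
  exact (hcl h).not_gt hv

lemma exists_posSupp_negSupp_sub_smul [Finite V] (x y : V → ℝ) : ∃ K : ℝ,
    posSupp (y - K • x) = (posSupp y \ posSupp x) ∪ negSupp x ∧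
    negSupp (y - K • x) = posSupp x ∪ (negSupp y \ negSupp x) := by
  obtain ⟨K, hK⟩ := (Set.finite_range fun v => y v / x v).bddAbove
  have hlt : ∀ v, y v / x v < K + 1 := fun v => (hK ⟨v, rfl⟩).trans_lt (lt_add_one K)
  -- `K + 1` exceeds every ratio `y v / x v`, so `y - (K + 1) • x` has the sign of `-x` on `supp x`
  refine ⟨K + 1, ?_, ?_⟩ <;> ext v <;>
    simp only [posSupp, negSupp, mem_union, mem_sdiff, mem_ofPred_eq, Pi.sub_apply,
      Pi.smul_apply, smul_eq_mul] <;>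
    rcases lt_trichotomy (x v) 0 with h | h | h
  all_goals first
    | have := (div_lt_iff_of_neg h).1 (hlt v); grind
    | have := (div_lt_iff₀ h).1 (hlt v); grind
    | simp [h]

namespace Semivalid

variable {L : Submodule ℝ (V → ℝ)} {x y : V → ℝ}

lemma posSupp_nonempty (hL : Semivalid G L) (hx : x ∈ L) (hx0 : x ≠ 0) :
    (posSupp x).Nonempty :=
  (hL x hx hx0).1.1

lemma negSupp_nonempty (hL : Semivalid G L) (hx : x ∈ L) (hx0 : x ≠ 0) :
    (negSupp x).Nonempty :=
  (hL x hx hx0).1.2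

lemma compCount_posSupp_eq_two (hL : Semivalid G L) (hx : x ∈ L) (hx0 : x ≠ 0)
    (hb : ¬ (G.induce (posSupp x)).Connected) : compCount G (posSupp x) = 2 :=
  ((hL x hx hx0).2.1.resolve_left hb).1

lemma connected_negSupp (hL : Semivalid G L) (hx : x ∈ L) (hx0 : x ≠ 0)
    (hb : ¬ (G.induce (posSupp x)).Connected) : (G.induce (negSupp x)).Connected :=
  ((hL x hx hx0).2.1.resolve_left hb).2

lemma noEdgeBetween_posSupp_negSupp (hL : Semivalid G L) (hx : x ∈ L) (hx0 : x ≠ 0)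
    (hb : ¬ (G.induce (posSupp x)).Connected) : NoEdgeBetween G (posSupp x) (negSupp x) :=
  ((hL x hx hx0).2.2.2 hb).1

lemma nbhd_eq_of_isComponentOf (hL : Semivalid G L) (hx : x ∈ L) (hx0 : x ≠ 0)
    (hb : ¬ (G.induce (posSupp x)).Connected) {C : Set V} (hC : IsComponentOf G (supp x) C) :
    nbhd G C = nbhd G (supp x) :=
  ((hL x hx hx0).2.2.2 hb).2 C hC

lemma negSupp_eq_of_posSupp_eq (hL : Semivalid G L) (hx : x ∈ L) (hx0 : x ≠ 0) (hy : y ∈ L)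
    (hy0 : y ≠ 0) (hb : ¬ (G.induce (posSupp y)).Connected) (hp : posSupp x = posSupp y)
    (hn : negSupp x ⊆ negSupp y) : negSupp x = negSupp y := by
  have hbx : ¬ (G.induce (posSupp x)).Connected := hp ▸ hb
  have hxpn := hL.noEdgeBetween_posSupp_negSupp hx hx0 hbx
  have hN : IsComponentOf G (supp x) (negSupp x) := by
    refine isComponentOf_iff.2 ⟨?_, hL.connected_negSupp hx hx0 hbx, ?_⟩
    · exact supp_diff_posSupp x ▸ sdiff_subset
    · exact supp_diff_negSupp x ▸ hxpn.symm
  obtain ⟨a, ha⟩ := hL.posSupp_nonempty hx hx0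
  set K := Subtype.val '' ((G.induce (posSupp x)).connectedComponentMk ⟨a, ha⟩).supp
  have hKx : IsComponentOf G (posSupp x) K := ⟨_, rfl⟩
  have hK : IsComponentOf G (supp x) K :=
    hKx.of_noEdgeBetween (supp_diff_negSupp x ▸ sdiff_subset) (supp_diff_posSupp x ▸ hxpn)
  -- by (iv) for `x`, a neighbour of `negSupp x` is a neighbour of `K ⊆ posSupp y`
  have hsep : NoEdgeBetween G (negSupp x) (negSupp y \ negSupp x) := by
    intro u hu w hw huw
    have hw' : w ∈ nbhd G (supp x) :=
      hL.nbhd_eq_of_isComponentOf hx hx0 hbx hN ▸ ⟨hw.2, u, hu, huw⟩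
    obtain ⟨-, u', hu', hu'w⟩ := hL.nbhd_eq_of_isComponentOf hx hx0 hbx hK ▸ hw'
    have hu'y : u' ∈ posSupp y := hp ▸ (isComponentOf_iff.1 hKx).1 hu'
    exact hL.noEdgeBetween_posSupp_negSupp hy hy0 hb u' hu'y w hw.1 hu'w
  by_contra hne
  refine hsep.not_connected_induce_union (hL.negSupp_nonempty hx hx0)
    (nonempty_of_ssubset (hn.ssubset_of_ne hne)) disjoint_sdiff_right ?_
  rw [union_sdiff_cancel hn]
  exact hL.connected_negSupp hy hy0 hb

lemma isComponentOf_posSupp [Finite V] (hL : Semivalid G L) (hx : x ∈ L) (hx0 : x ≠ 0)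
    (hy : y ∈ L) (hy0 : y ≠ 0) (hb : ¬ (G.induce (posSupp y)).Connected)
    (hp : posSupp x ⊂ posSupp y) (hn : negSupp x ⊆ negSupp y) :
    IsComponentOf G (posSupp y) (posSupp x) := by
  set P := posSupp y \ posSupp x
  set D := negSupp y \ negSupp x
  have hypn := hL.noEdgeBetween_posSupp_negSupp hy hy0 hb
  obtain ⟨z, hzL, hzp, hzn⟩ : ∃ z ∈ L, posSupp z = P ∪ negSupp x ∧ negSupp z = posSupp x ∪ D :=
    let ⟨K, hK⟩ := exists_posSupp_negSupp_sub_smul x y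
    ⟨y - K • x, L.sub_mem hy (L.smul_mem K hx), hK⟩
  have hxp := hL.posSupp_nonempty hx hx0
  have hxn := hL.negSupp_nonempty hx hx0
  have hP : P.Nonempty := nonempty_of_ssubset hp
  have hPN : NoEdgeBetween G P (negSupp x) := hypn.mono sdiff_subset hn
  have hPN' : Disjoint P (negSupp x) := (disjoint_posSupp_negSupp y).mono sdiff_subset hn
  have hz0 : z ≠ 0 := ne_zero_of_posSupp_nonempty (hzp ▸ hxn.mono subset_union_right)
  have hzb : ¬ (G.induce (posSupp z)).Connected :=
    hzp ▸ hPN.not_connected_induce_union hP hxn hPN'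
  have hzn_conn := hL.connected_negSupp hzL hz0 hzb
  have hD : D = ∅ := by
    by_contra hD
    exact (hypn.mono hp.subset sdiff_subset).not_connected_induce_union hxp
      (nonempty_iff_ne_empty.2 hD) ((disjoint_posSupp_negSupp y).mono hp.subset sdiff_subset)
      (hzn ▸ hzn_conn)
  have hxc : (G.induce (posSupp x)).Connected := by
    rwa [hzn, hD, union_empty] at hzn_conn
  have hPc : (G.induce P).Connected := connected_induce_left_of_compCount_union_eq_two
    (hzp ▸ hL.compCount_posSupp_eq_two hzL hz0 hzb) hP hxn hPN' hPN
  have hyxP : posSupp x ∪ P = posSupp y := union_sdiff_cancel hp.subset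
  exact isComponentOf_iff.2 ⟨hp.subset, hxc,
    NoEdgeBetween.of_not_connected_induce_union hxc hPc (by rwa [hyxP])⟩

end Semivalid

end

theorem stmt15_general (G : SimpleGraph V) (L : Submodule ℝ (V → ℝ))
    (hL : Semivalid G L) (x y : V → ℝ) (hx : x ∈ L) (hx0 : x ≠ 0)
    (hy : y ∈ L) (hy0 : y ≠ 0)
    (hbroken : ¬ (G.induce (posSupp y)).Connected)
    (hbd : signCone L x ⊆ closure (signCone L y) \ signCone L y) :
    ∃ K : (G.induce (posSupp y)).ConnectedComponent,
      Subtype.val '' K.supp ⊆ posSupp x ∧ posSupp x = Subtype.val '' K.supp := by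
  have hxy : x ∈ closure (signCone L y) \ signCone L y := hbd ⟨hx, rfl, rfl⟩
  have hp := posSupp_subset_of_mem_closure_signCone hxy.1
  have hn := negSupp_subset_of_mem_closure_signCone hxy.1
  have hpp : posSupp x ≠ posSupp y := fun hpp =>
    hxy.2 ⟨hx, hpp, hL.negSupp_eq_of_posSupp_eq hx hx0 hy hy0 hbroken hpp hn⟩
  obtain ⟨K, hK⟩ := hL.isComponentOf_posSupp hx hx0 hy hy0 hbroken (hp.ssubset_of_ne hpp) hn
  exact ⟨K, hK.symm.subset, hK⟩

/-- if the cone `α = signCone L x` lies in the boundary of a broken cone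
`β = signCone L y`, then `supp₊(α)` contains one of the connected components of
`G[supp₊(β)]`, and in fact equals that single component. -/
theorem stmt15 (G : SimpleGraph V) (hG : G.Connected) (L : Submodule ℝ (V → ℝ))
    (hL : Semivalid G L) (x y : V → ℝ) (hx : x ∈ L) (hx0 : x ≠ 0)
    (hy : y ∈ L) (hy0 : y ≠ 0)
    (hbroken : ¬ (G.induce (posSupp y)).Connected)
    (hbd : signCone L x ⊆ closure (signCone L y) \ signCone L y) :
    ∃ K : (G.induce (posSupp y)).ConnectedComponent,
      Subtype.val '' K.supp ⊆ posSupp x ∧ posSupp x = Subtype.val '' K.supp :=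
  stmt15_general G L hL x y hx hx0 hy hy0 hbroken hbd
end
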